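/- Every segment s_j satisfies 0 < dur(s_j) ≤ T/2. -/

import Mathlib

namespace CRUAV

/-! ### Generic single-UAV CR-UAV notions -/

/-- Duration of the subpath of an infinite path `s` between positions `a` and `b`. -/
def dur {V : Type*} (FT : V → V → ℕ) (s : ℕ → V) (a b : ℕ) : ℕ :=
  ∑ i ∈ Finset.Ico a b, FT (s i) (s (i + 1))

/-- `s` is a solution: an infinite path (consecutive vertices distinct) visiting every
vertex infinitely often, in which any subpath joining consecutive occurrences of a
vertex `v` has duration at most `RD v`. -/
def IsSolution {V : Type*} (RD : V → ℕ) (FT : V → V → ℕ) (s : ℕ → V) : Prop :=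
  (∀ n, s n ≠ s (n + 1)) ∧
  (∀ v : V, ∀ N : ℕ, ∃ n, N ≤ n ∧ s n = v) ∧
  (∀ v : V, ∀ a b : ℕ, a < b → s a = v → s b = v →
      (∀ i, a < i → i < b → s i ≠ v) → dur FT s a b ≤ RD v)

/-- The infinite periodic path obtained by repeating the finite word `u` forever. -/
def omegaPath {V : Type*} (u : List V) (d : V) : ℕ → V :=
  fun n => u.getD (n % u.length) d

/-- Duration of a finite path given as a list of vertices. -/
def durL {V : Type*} (FT : V → V → ℕ) (L : List V) : ℕ :=
  (L.zipWith FT L.tail).sum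

/-- The (inclusive) slice of a list between positions `a` and `b`. -/
def slice {V : Type*} (L : List V) (a b : ℕ) : List V := (L.take (b + 1)).drop a

/-- Duration of the subpath of the finite path `L` between positions `a` and `b`. -/
def fragDur {V : Type*} (FT : V → V → ℕ) (d : V) (L : List V) (a b : ℕ) : ℕ :=
  ∑ i ∈ Finset.Ico a b, FT (L.getD i d) (L.getD (i + 1) d)

/-! ### The constructed instance `G` -/

/-- The constant `l = 24h + 34`. -/
def l (h : ℕ) : ℕ := 24 * h + 34

/-- The constant `T`. -/
def T (m h : ℕ) : ℕ :=
  2 * (m * (2 * (3 * m + 1) * l h + l h) + m * (2 * (3 * m + 2) * l h + l h) + l h + 2 * h)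

/-- The vertices of the constructed instance `G`.  Gadgets are indexed by
`g : Fin (2*m)`: gadget `g` with `g < m` belongs to the variable `x_{g+1}^0`, and
gadget `g` with `m ≤ g` to the variable `x_{g-m+1}^1`.  `shared k` is the vertex
`v_{k+1}` shared by consecutive gadgets.  In `side g right pos`, `right = false`
selects the left side `LS` and `right = true` the right side `RS`; `pos` is
`0` (top), `1` (middle), `2` (bottom).  `row g c pos` is the vertex of the row of
gadget `g` in column `c` (of the `4h+2` columns of the `h` clause boxes alternating
with the `h+1` separator boxes) at height `pos`.  `clauseV k` is the clause vertex of
clause `c_{k+1}`; `pvt i right` is the pivot vertex of `LCG_{i+1}`/`RCG_{i+1}` and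
`port i right d` its four surrounding vertices (`d`: `0` = in↓, `1` = out↑,
`2` = in↑, `3` = out↓). -/
inductive Vtx (m h : ℕ) : Type where
  | top : Vtx m h
  | bot : Vtx m h
  | mid : Vtx m h
  | shared (k : Fin (2 * m - 1)) : Vtx m h
  | side (g : Fin (2 * m)) (right : Bool) (pos : Fin 3) : Vtx m h
  | row (g : Fin (2 * m)) (c : Fin (4 * h + 2)) (pos : Fin 3) : Vtx m h
  | clauseV (k : Fin h) : Vtx m h
  | pvt (i : Fin m) (right : Bool) : Vtx m h
  | port (i : Fin m) (right : Bool) (d : Fin 4) : Vtx m h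
  deriving DecidableEq

/-- The vertex at the top of gadget `g`. -/
def topVtx {m h : ℕ} (g : Fin (2 * m)) : Vtx m h :=
  if hg : (g : ℕ) = 0 then .top else .shared ⟨(g : ℕ) - 1, by have := g.isLt; omega⟩

/-- The vertex at the bottom of gadget `g`. -/
def botVtx {m h : ℕ} (g : Fin (2 * m)) : Vtx m h :=
  if hg : (g : ℕ) = 2 * m - 1 then .bot else .shared ⟨(g : ℕ), by have := g.isLt; omega⟩

/-- Flight time of the two long edges at the top of gadget `g`. -/
def longTop (m h : ℕ) (g : Fin (2 * m)) : ℕ :=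
  if (g : ℕ) < m then (3 * m + 1) * l h else (3 * m + 2) * l h

/-- Flight time of the two long edges at the bottom of gadget `g`
(the bottom long edges of the gadget of `x_m^0` already have flight time `(3m+2)l`). -/
def longBot (m h : ℕ) (g : Fin (2 * m)) : ℕ :=
  if (g : ℕ) + 1 < m then (3 * m + 1) * l h else (3 * m + 2) * l h

/-- The edges of `G`, listed in one direction, with their flight times.
`occurs k g = some true` (resp. `some false`) means that the variable of gadget `g`
occurs positively (resp. negatively) in the clause `c_{k+1}`. -/
def adjFT (m h : ℕ) (occurs : Fin h → Fin (2 * m) → Option Bool) :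
    Vtx m h → Vtx m h → Option ℕ
  -- long edges from the top of the first gadget
  | .top, .side g _ p => if (g : ℕ) = 0 ∧ (p : ℕ) = 0 then some (longTop m h g) else none
  -- long edges into the bottom of the last gadget
  | .bot, .side g _ p => if (g : ℕ) = 2 * m - 1 ∧ (p : ℕ) = 2 then some (longBot m h g) else none
  -- long edges at shared vertices
  | .shared k, .side g _ p =>
      if (k : ℕ) + 1 = (g : ℕ) ∧ (p : ℕ) = 0 then some (longTop m h g)
      else if (k : ℕ) = (g : ℕ) ∧ (p : ℕ) = 2 then some (longBot m h g)
      else none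
  -- vertical edges inside `LS` and `RS`
  | .side g r p, .side g' r' p' =>
      if g = g' ∧ r = r' ∧ (p : ℕ) + 1 = (p' : ℕ) then some 2 else none
  -- vertical edges inside a column of a row, and horizontal edges along the top
  -- and the bottom of a row
  | .row g c p, .row g' c' p' =>
      if g = g' ∧ c = c' ∧ (p : ℕ) + 1 = (p' : ℕ) then some 2
      else if g = g' ∧ (c : ℕ) + 1 = (c' : ℕ) ∧ p = p' ∧ ((p : ℕ) = 0 ∨ (p : ℕ) = 2) then
        some 2
      else none
  -- the edges at `v_mid`
  | .mid, .top => some (T m h / 4)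
  | .mid, .bot => some (T m h / 4)
  -- edges joining a clause vertex to the two bottom (positive occurrence) or the two
  -- top (negative occurrence) corners of the corresponding clause box
  | .clauseV k, .row g c p =>
      if ((c : ℕ) = 4 * (k : ℕ) + 2 ∨ (c : ℕ) = 4 * (k : ℕ) + 3) ∧
          ((occurs k g = some true ∧ (p : ℕ) = 2) ∨ (occurs k g = some false ∧ (p : ℕ) = 0))
      then some 2 else none
  -- edges inside the consistency gadgets
  | .pvt i r, .port i' r' _ => if i = i' ∧ r = r' then some 2 else none
  -- edges joining the ports of the consistency gadgets to the sides `LS`/`RS`: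
  -- in↓ and out↑ serve the gadget of `x_{i+1}^0`, in↑ and out↓ that of `x_{i+1}^1`;
  -- "in" ports attach to the bottom of the side, "out" ports to its top
  | .port i r dd, .side g s p =>
      if s = r ∧
          ((((dd : ℕ) = 0 ∨ (dd : ℕ) = 1) ∧ (g : ℕ) = (i : ℕ)) ∨
            (((dd : ℕ) = 2 ∨ (dd : ℕ) = 3) ∧ (g : ℕ) = (i : ℕ) + m)) ∧
          ((((dd : ℕ) = 0 ∨ (dd : ℕ) = 2) ∧ (p : ℕ) = 2) ∨
            (((dd : ℕ) = 1 ∨ (dd : ℕ) = 3) ∧ (p : ℕ) = 0))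
      then some 2 else none
  -- edges joining the ports of the consistency gadgets to the end columns of the rows
  -- (as in Figure 4 of the paper: on the left, in↓/in↑ attach to the bottom-left and
  -- out↑/out↓ to the top-left row corner; on the right, in↓/in↑ attach to the
  -- top-right and out↑/out↓ to the bottom-right row corner)
  | .port i r dd, .row g c p =>
      if ((r = false ∧ (c : ℕ) = 0) ∨ (r = true ∧ (c : ℕ) = 4 * h + 1)) ∧
          ((((dd : ℕ) = 0 ∨ (dd : ℕ) = 1) ∧ (g : ℕ) = (i : ℕ)) ∨
            (((dd : ℕ) = 2 ∨ (dd : ℕ) = 3) ∧ (g : ℕ) = (i : ℕ) + m)) ∧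
          ((r = false ∧ ((((dd : ℕ) = 0 ∨ (dd : ℕ) = 2) ∧ (p : ℕ) = 2) ∨
              (((dd : ℕ) = 1 ∨ (dd : ℕ) = 3) ∧ (p : ℕ) = 0))) ∨
            (r = true ∧ ((((dd : ℕ) = 0 ∨ (dd : ℕ) = 2) ∧ (p : ℕ) = 0) ∨
              (((dd : ℕ) = 1 ∨ (dd : ℕ) = 3) ∧ (p : ℕ) = 2))))
      then some 2 else none
  | _, _ => none

/-- The flight times of `G`: the listed edges, symmetrised; all remaining pairs of
distinct vertices are joined by an edge of flight time `2T`. -/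
def FT (m h : ℕ) (occurs : Fin h → Fin (2 * m) → Option Bool) (v w : Vtx m h) : ℕ :=
  if v = w then 0
  else
    match adjFT m h occurs v w with
    | some x => x
    | none =>
      match adjFT m h occurs w v with
      | some x => x
      | none => 2 * T m h

/-- The relative deadlines of `G`. -/
def RD (m h : ℕ) : Vtx m h → ℕ
  | .top => T m h
  | .bot => T m h
  | .mid => T m h
  | .shared _ => T m h + 2 * h
  | .side _ _ _ => T m h + l h + 2 * h
  | .row _ _ _ => T m h + l h + 2 * h
  | .clauseV _ => 3 * T m h / 2
  | .pvt i _ => T m h / 2 + m * (2 * (3 * m + 2) * l h + l h) + 4 * h - (2 * (i : ℕ) + 1) * l h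
  | .port _ _ _ => 3 * T m h / 2

/-! ### Periodic solutions split into segments -/

/-- The word `v_mid s₁ v_mid s₂ ⋯ v_mid s_p`. -/
def word {m h p : ℕ} (segs : Fin p → List (Vtx m h)) : List (Vtx m h) :=
  (List.ofFn (fun j => Vtx.mid :: segs j)).flatten

/-- The infinite periodic path `(v_mid s₁ v_mid s₂ ⋯ v_mid s_p)^ω`. -/
def pathOf {m h p : ℕ} (segs : Fin p → List (Vtx m h)) : ℕ → Vtx m h :=
  omegaPath (word segs) .mid

/-- The special vertices `S ∪ {v_top, v_bot}`. -/
def isSpecial {m h : ℕ} : Vtx m h → Bool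
  | .top => true
  | .bot => true
  | .shared _ => true
  | _ => false

/-- A fragment of the segment `L`: a maximal subpath, from position `a` to position
`b`, whose endpoints are distinct special vertices and which contains no other
special vertex. -/
def Fragment {m h : ℕ} (L : List (Vtx m h)) (a b : ℕ) : Prop :=
  a < b ∧ b < L.length ∧
    isSpecial (L.getD a Vtx.mid) = true ∧ isSpecial (L.getD b Vtx.mid) = true ∧
    L.getD a Vtx.mid ≠ L.getD b Vtx.mid ∧
    ∀ i, a < i → i < b → isSpecial (L.getD i Vtx.mid) = false

/-! ### Clause boxes, traversal patterns, traversal directions -/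

/-- The column of the first (`sec = false`) or second (`sec = true`) column of the
`(k+1)`-st clause box. -/
def boxCol {h : ℕ} (k : Fin h) (sec : Bool) : Fin (4 * h + 2) :=
  ⟨4 * (k : ℕ) + 2 + (if sec then 1 else 0), by have := k.isLt; split <;> omega⟩

/-- The vertices of the `(k+1)`-st clause box of gadget `g`. -/
def boxV {m h : ℕ} (g : Fin (2 * m)) (k : Fin h) (sec : Bool) (p : Fin 3) : Vtx m h :=
  .row g (boxCol k sec) p

/-- Membership in the `(k+1)`-st clause box of gadget `g`. -/
def InClauseBox {m h : ℕ} (g : Fin (2 * m)) (k : Fin h) (v : Vtx m h) : Prop :=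
  ∃ sec p, v = boxV g k sec p

/-- The order of the six vertices of a clause box in pattern `⊓`, entered at the
bottom corner of column `flip`. -/
def sqcapSeq {m h : ℕ} (g : Fin (2 * m)) (k : Fin h) (flip : Bool) : List (Vtx m h) :=
  [boxV g k flip 2, boxV g k flip 1, boxV g k flip 0,
   boxV g k (!flip) 0, boxV g k (!flip) 1, boxV g k (!flip) 2]

/-- The order of the six vertices of a clause box in pattern `⊔`, entered at the
top corner of column `flip`. -/
def sqcupSeq {m h : ℕ} (g : Fin (2 * m)) (k : Fin h) (flip : Bool) : List (Vtx m h) :=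
  [boxV g k flip 0, boxV g k flip 1, boxV g k flip 2,
   boxV g k (!flip) 2, boxV g k (!flip) 1, boxV g k (!flip) 0]

/-- `L` traverses the vertices of `seq` in order, consecutively except for possible
detours from a vertex of `seq` to a clause vertex and immediately back. -/
def TraversedIn {m h : ℕ} (L : List (Vtx m h)) (seq : List (Vtx m h)) : Prop :=
  ∃ f : Fin seq.length → ℕ,
    (∀ t, f t < L.length) ∧
    (∀ t, L.getD (f t) Vtx.mid = seq.get t) ∧
    (∀ (t : ℕ) (ht : t + 1 < seq.length),
      f ⟨t + 1, ht⟩ = f ⟨t, by omega⟩ + 1 ∨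
        (f ⟨t + 1, ht⟩ = f ⟨t, by omega⟩ + 2 ∧
          ∃ k', L.getD (f ⟨t, by omega⟩ + 1) Vtx.mid = Vtx.clauseV k'))

/-- The `(k+1)`-st clause box of gadget `g` is traversed in pattern `⊓` by the
segment `L` (each of its vertices being visited exactly once, with possible detours
via clause vertices). -/
def SqcapBox {m h : ℕ} (L : List (Vtx m h)) (g : Fin (2 * m)) (k : Fin h) : Prop :=
  (∀ sec p, L.count (boxV g k sec p) = 1) ∧ ∃ flip, TraversedIn L (sqcapSeq g k flip)

/-- The `(k+1)`-st clause box of gadget `g` is traversed in pattern `⊔` by the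
segment `L`. -/
def SqcupBox {m h : ℕ} (L : List (Vtx m h)) (g : Fin (2 * m)) (k : Fin h) : Prop :=
  (∀ sec p, L.count (boxV g k sec p) = 1) ∧ ∃ flip, TraversedIn L (sqcupSeq g k flip)

/-- The gadget of `x_{i+1}^0`, as an index in `Fin (2*m)`. -/
def g0 {m : ℕ} (i : Fin m) : Fin (2 * m) := ⟨(i : ℕ), by have := i.isLt; omega⟩

/-- The gadget of `x_{i+1}^1`, as an index in `Fin (2*m)`. -/
def g1 {m : ℕ} (i : Fin m) : Fin (2 * m) := ⟨(i : ℕ) + m, by have := i.isLt; omega⟩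

/-- Gadget `g` is traversed in the `true` direction by the segment `L`: the long edges
are used to enter the left side `LS` from the top vertex and to leave from the right
side `RS` to the bottom vertex. -/
def TravTrue {m h : ℕ} (L : List (Vtx m h)) (g : Fin (2 * m)) : Prop :=
  (∃ n, n + 1 < L.length ∧ L.getD n Vtx.mid = topVtx g ∧
      L.getD (n + 1) Vtx.mid = Vtx.side g false 0) ∧
  (∃ n, n + 1 < L.length ∧ L.getD n Vtx.mid = Vtx.side g true 2 ∧
      L.getD (n + 1) Vtx.mid = botVtx g)

/-- Gadget `g` is traversed in the `false` direction by the segment `L`: the long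
edges are used to enter the right side `RS` from the top vertex and to leave from the
left side `LS` to the bottom vertex. -/
def TravFalse {m h : ℕ} (L : List (Vtx m h)) (g : Fin (2 * m)) : Prop :=
  (∃ n, n + 1 < L.length ∧ L.getD n Vtx.mid = topVtx g ∧
      L.getD (n + 1) Vtx.mid = Vtx.side g true 0) ∧
  (∃ n, n + 1 < L.length ∧ L.getD n Vtx.mid = Vtx.side g false 2 ∧
      L.getD (n + 1) Vtx.mid = botVtx g)

/-- Position of the first visit, within the first `m` fragments of the segment `L`
(i.e. at positions preceded by at most `m` occurrences of special vertices), of the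
pivot pair `{pvt_{i+1}^L, pvt_{i+1}^R}`. -/
noncomputable def firstVisitFH (m h : ℕ) (L : List (Vtx m h)) (i : Fin m) : ℕ :=
  sInf {n | n < L.length ∧ (L.take (n + 1)).countP isSpecial ≤ m ∧
    (L.getD n Vtx.mid = Vtx.pvt i false ∨ L.getD n Vtx.mid = Vtx.pvt i true)}

/-- Position of the first visit, within the last `m` fragments of the segment `L`
(i.e. at positions preceded by at least `m+1` occurrences of special vertices), of the
pivot pair `{pvt_{i+1}^L, pvt_{i+1}^R}`. -/
noncomputable def firstVisitSH (m h : ℕ) (L : List (Vtx m h)) (i : Fin m) : ℕ :=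
  sInf {n | n < L.length ∧ m + 1 ≤ (L.take (n + 1)).countP isSpecial ∧
    (L.getD n Vtx.mid = Vtx.pvt i false ∨ L.getD n Vtx.mid = Vtx.pvt i true)}

/-- `φ(j)` is satisfied: every clause is satisfied by the assignment `σ`, where the
variable `x_{i+1}^0` of clause `c_{k+1}` reads `σ j i` and the variable `x_{i+1}^1`
reads `σ (j+1) i`. -/
def SatisfiesAt (m h : ℕ) (occurs : Fin h → Fin (2 * m) → Option Bool)
    (σ : ℕ → Fin m → Bool) (j : ℕ) : Prop :=
  ∀ k : Fin h, ∃ (g : Fin (2 * m)) (b : Bool), occurs k g = some b ∧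
    (if hg : (g : ℕ) < m then σ j ⟨(g : ℕ), hg⟩ = b
     else σ (j + 1) ⟨(g : ℕ) - m, by have := g.isLt; omega⟩ = b)
/-! ### Auxiliary lemmas for the proof -/


variable {m h : ℕ}

lemma T_eq4 (m h : ℕ) : T m h = 4 * (4*m*(12*h+17)*(3*m+2) + 13*h + 17) := by
  unfold T l; ring

lemma T_ge (m h : ℕ) : 68 ≤ T m h := by
  have h1 := T_eq4 m h
  have h0 : 0 ≤ 4*m*(12*h+17)*(3*m+2) := Nat.zero_le _
  omega

lemma T_mod4 (m h : ℕ) : T m h % 4 = 0 := by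
  have h1 := T_eq4 m h; omega

lemma adjFT_to_mid (occurs : Fin h → Fin (2*m) → Option Bool) (v : Vtx m h) :
    adjFT m h occurs v .mid = none := by
  cases v <;> rfl

lemma adjFT_from_mid (occurs : Fin h → Fin (2*m) → Option Bool) (v : Vtx m h) :
    adjFT m h occurs .mid v =
      if v = .top ∨ v = .bot then some (T m h / 4) else none := by
  cases v <;> simp [adjFT]

lemma FT_from_mid (occurs : Fin h → Fin (2*m) → Option Bool) (v : Vtx m h) (hv : v ≠ .mid) :
    FT m h occurs .mid v = if v = .top ∨ v = .bot then T m h / 4 else 2 * T m h := by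
  unfold FT
  rw [if_neg (fun e => hv e.symm), adjFT_from_mid, adjFT_to_mid]
  by_cases h2 : v = Vtx.top ∨ v = Vtx.bot
  · rw [if_pos h2, if_pos h2]
  · rw [if_neg h2, if_neg h2]

lemma FT_to_mid (occurs : Fin h → Fin (2*m) → Option Bool) (v : Vtx m h) (hv : v ≠ .mid) :
    FT m h occurs v .mid = if v = .top ∨ v = .bot then T m h / 4 else 2 * T m h := by
  unfold FT
  rw [if_neg hv, adjFT_to_mid, adjFT_from_mid]
  by_cases h2 : v = Vtx.top ∨ v = Vtx.bot
  · rw [if_pos h2, if_pos h2]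
  · rw [if_neg h2, if_neg h2]

lemma adjFT_pos (occurs : Fin h → Fin (2*m) → Option Bool) {v w : Vtx m h} {x : ℕ}
    (hx : adjFT m h occurs v w = some x) : 0 < x := by
  have hl : 0 < l h := by unfold l; omega
  have hT := T_ge m h
  have hlt : ∀ g : Fin (2*m), 0 < longTop m h g := by
    intro g; unfold longTop; split <;> exact Nat.mul_pos (by omega) hl
  have hlb : ∀ g : Fin (2*m), 0 < longBot m h g := by
    intro g; unfold longBot; split <;> exact Nat.mul_pos (by omega) hl
  cases v <;> cases w <;> simp only [adjFT] at hx <;>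
    first
      | (split_ifs at hx <;>
          first
            | (simp only [Option.some.injEq] at hx;
                first | omega | (rw [← hx]; first | exact hlt _ | exact hlb _))
            | simp at hx)
      | (simp only [Option.some.injEq] at hx; omega)
      | exact absurd hx (by simp)

lemma FT_pos' (occurs : Fin h → Fin (2*m) → Option Bool) {v w : Vtx m h} (hvw : v ≠ w) :
    0 < FT m h occurs v w := by
  have hT := T_ge m h
  unfold FT
  rw [if_neg hvw]
  rcases h1 : adjFT m h occurs v w with _ | x
  · rcases h2 : adjFT m h occurs w v with _ | x
    · simp only [h1, h2]; omega
    · simp only [h1, h2]; exact adjFT_pos occurs h2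
  · simp only [h1]; exact adjFT_pos occurs h1

lemma durL_sum {V : Type*} (FT : V → V → ℕ) (d : V) :
    ∀ L : List V, durL FT L =
      ∑ i ∈ Finset.range (L.length - 1), FT (L.getD i d) (L.getD (i+1) d) := by
  intro L
  induction L with
  | nil => simp [durL]
  | cons x L ih =>
    cases L with
    | nil => simp [durL]
    | cons y r =>
      have h1 : durL FT (x :: y :: r) = FT x y + durL FT (y :: r) := by
        simp [durL]
      have h2 : (x::y::r : List V).length - 1 = r.length + 1 := by simp
      rw [h1, h2, Finset.sum_range_succ']
      simp only [List.getD_cons_succ, List.getD_cons_zero]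
      have h3 : (y::r : List V).length - 1 = r.length := by simp
      rw [h3] at ih
      simp only [List.getD_cons_succ] at ih
      omega

lemma getD_cons_length {α : Type*} (x : α) (L : List α) (d : α) (hL : 1 ≤ L.length) :
    (x :: L).getD L.length d = L.getD (L.length - 1) d := by
  obtain ⟨n', hn'⟩ : ∃ n', L.length = n' + 1 := ⟨L.length - 1, by omega⟩
  rw [hn', List.getD_cons_succ, Nat.add_sub_cancel]

def blocks {m h p : ℕ} (segs : Fin p → List (Vtx m h)) : List (List (Vtx m h)) :=
  List.ofFn (fun j => Vtx.mid :: segs j)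

def off {m h p : ℕ} (segs : Fin p → List (Vtx m h)) (j : ℕ) : ℕ :=
  (((blocks segs).take j).flatten).length

variable {p : ℕ} (segs : Fin p → List (Vtx m h))

lemma word_eq_blocks : word segs = (blocks segs).flatten := rfl

lemma blocks_length : (blocks segs).length = p := List.length_ofFn

lemma off_zero : off segs 0 = 0 := rfl

lemma off_succ {j : ℕ} (hj : j < p) :
    off segs (j+1) = off segs j + (1 + (segs ⟨j, hj⟩).length) := by
  unfold off
  rw [List.take_succ, List.flatten_append, List.length_append]
  congr 1
  rw [List.getElem?_eq_getElem (by rw [blocks_length]; exact hj)]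
  simp [blocks, List.getElem_ofFn]
  omega

lemma off_le_succ (j : ℕ) : off segs j ≤ off segs (j+1) := by
  unfold off
  rw [List.take_succ, List.flatten_append, List.length_append]
  omega

lemma off_mono : Monotone (off segs) := monotone_nat_of_le_succ (off_le_succ segs)

lemma word_length : (word segs).length = off segs p := by
  rw [word_eq_blocks]
  unfold off
  rw [List.take_of_length_le (le_of_eq (blocks_length segs))]

lemma getW (j r : ℕ) (hj : j < p) (hr : r < 1 + (segs ⟨j, hj⟩).length) (d : Vtx m h) :
    (word segs).getD (off segs j + r) d = (Vtx.mid :: segs ⟨j, hj⟩).getD r d := by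
  have hjb : j < (blocks segs).length := by rw [blocks_length]; exact hj
  have hblk : (blocks segs)[j] = Vtx.mid :: segs ⟨j, hj⟩ := by
    simp [blocks, List.getElem_ofFn]
  have hdecomp : word segs = ((blocks segs).take j).flatten ++
      ((Vtx.mid :: segs ⟨j, hj⟩) ++ ((blocks segs).drop (j+1)).flatten) := by
    rw [word_eq_blocks]
    conv_lhs => rw [← List.take_append_drop j (blocks segs)]
    rw [List.flatten_append, List.drop_eq_getElem_cons hjb, hblk]
    simp
  have hl0 : (((blocks segs).take j).flatten).length = off segs j := rfl
  rw [hdecomp, List.getD_eq_getElem?_getD,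
    List.getElem?_append_right (by rw [hl0]; exact Nat.le_add_right _ _), hl0,
    Nat.add_sub_cancel_left,
    List.getElem?_append_left (by simp; omega), ← List.getD_eq_getElem?_getD]


/-- Every segment has duration strictly positive and at most
`T/2`. -/
theorem segment_duration_bounds (m h : ℕ) (hm : 2 < m) (hh : 0 < h)
    (occurs : Fin h → Fin (2 * m) → Option Bool)
    (p : ℕ) (hp : 0 < p) (segs : Fin p → List (Vtx m h))
    (hne : ∀ j, segs j ≠ [])
    (hmid : ∀ j, Vtx.mid ∉ segs j)
    (hsol : IsSolution (RD m h) (FT m h occurs) (pathOf segs)) :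
    ∀ j, 0 < durL (FT m h occurs) (segs j) ∧ durL (FT m h occurs) (segs j) ≤ T m h / 2 := by
  classical
  obtain ⟨hdist, hio, hRD⟩ := hsol
  set s : ℕ → Vtx m h := pathOf segs with hsdef
  set N : ℕ := off segs p with hNdef
  have hTmod := T_mod4 m h
  have hT68 := T_ge m h
  have hlen : ∀ j : Fin p, 1 ≤ (segs j).length := by
    intro j; have := hne j
    cases hL : segs j with
    | nil => exact absurd hL this
    | cons a L => simp [hL]
  have hNeq : (word segs).length = N := word_length segs
  have hsW : ∀ n, s n = (word segs).getD (n % N) Vtx.mid := by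
    intro n
    show (word segs).getD (n % (word segs).length) Vtx.mid = _
    rw [hNeq]
  have hN1 : 1 ≤ N := by
    have h01 := off_succ segs hp
    have h02 := off_mono segs (show 0 + 1 ≤ p from hp)
    have := hlen ⟨0, hp⟩
    rw [off_zero] at h01
    omega
  have hsval : ∀ (j : ℕ) (hj : j < p) (r : ℕ), r < 1 + (segs ⟨j, hj⟩).length →
      s (off segs j + r) = (Vtx.mid :: segs ⟨j, hj⟩).getD r Vtx.mid := by
    intro j hj r hr
    have h1 := off_succ segs hj
    have h2 := off_mono segs (show j + 1 ≤ p from hj)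
    have hlt : off segs j + r < N := by omega
    rw [hsW, Nat.mod_eq_of_lt hlt]
    exact getW segs j r hj hr _
  have hper : ∀ n k, s (n + k * N) = s n := by
    intro n k
    rw [hsW, hsW n, Nat.add_mul_mod_self_right]
  have hs_off : ∀ j, j ≤ p → s (off segs j) = Vtx.mid := by
    intro j hj
    rcases lt_or_eq_of_le hj with hj' | rfl
    · have := hsval j hj' 0 (by omega)
      simpa using this
    · rw [hsW, ← hNdef, Nat.mod_self]
      have := getW segs 0 0 hp (by omega) Vtx.mid
      rw [off_zero] at this
      simpa using this
  -- generic bracketing bound for a segment placed at `a+1 … a+len`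
  have hgen : ∀ (L : List (Vtx m h)) (a : ℕ), 1 ≤ L.length →
      Vtx.mid ∉ L →
      s a = Vtx.mid → s (a + 1 + L.length) = Vtx.mid →
      (∀ r, r < L.length → s (a + 1 + r) = L.getD r Vtx.mid) →
      FT m h occurs Vtx.mid (L.getD 0 Vtx.mid) + durL (FT m h occurs) L
        + FT m h occurs (L.getD (L.length - 1) Vtx.mid) Vtx.mid ≤ T m h := by
    intro L a hlen1 hnm hsa hsb hmidL
    have hint : ∀ i, a < i → i < a + 1 + L.length → s i ≠ Vtx.mid := by
      intro i h1 h2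
      have hr : i - a - 1 < L.length := by omega
      have hsi : s i = L.getD (i - a - 1) Vtx.mid := by
        have := hmidL (i - a - 1) hr
        rwa [show a + 1 + (i - a - 1) = i by omega] at this
      rw [hsi, List.getD_eq_getElem _ _ hr]
      intro hcon
      exact hnm (hcon ▸ List.getElem_mem hr)
    have hdur := hRD Vtx.mid a (a + 1 + L.length) (by omega) hsa hsb hint
    rw [show RD m h Vtx.mid = T m h from rfl] at hdur
    have hdureq : dur (FT m h occurs) s a (a + 1 + L.length)
        = FT m h occurs Vtx.mid (L.getD 0 Vtx.mid) + durL (FT m h occurs) L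
          + FT m h occurs (L.getD (L.length - 1) Vtx.mid) Vtx.mid := by
      unfold dur
      rw [Finset.sum_Ico_eq_sum_range,
        show a + 1 + L.length - a = L.length + 1 by omega]
      obtain ⟨n, hn⟩ : ∃ n, L.length = n + 1 := ⟨L.length - 1, by omega⟩
      rw [show L.length - 1 = n by omega]
      rw [hn, Finset.sum_range_succ, Finset.sum_range_succ']
      have e0 : FT m h occurs (s (a + 0)) (s (a + 0 + 1))
          = FT m h occurs Vtx.mid (L.getD 0 Vtx.mid) := by
        rw [show a + 0 = a by omega, hsa,
          show a + 1 = a + 1 + 0 by omega, hmidL 0 (by omega)]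
      have emid : ∀ i ∈ Finset.range n,
          FT m h occurs (s (a + (i + 1))) (s (a + (i + 1) + 1))
            = FT m h occurs (L.getD i Vtx.mid) (L.getD (i+1) Vtx.mid) := by
        intro i hi
        rw [Finset.mem_range] at hi
        rw [show a + (i + 1) = a + 1 + i by omega, hmidL i (by omega),
          show a + 1 + i + 1 = a + 1 + (i+1) by omega, hmidL (i+1) (by omega)]
      have elast : FT m h occurs (s (a + (n + 1))) (s (a + (n + 1) + 1))
          = FT m h occurs (L.getD n Vtx.mid) Vtx.mid := by
        rw [show a + (n + 1) = a + 1 + n by omega, hmidL n (by omega),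
          show a + 1 + n + 1 = a + 1 + L.length by omega, hsb]
      rw [Finset.sum_congr rfl emid, e0, elast]
      rw [durL_sum (FT m h occurs) Vtx.mid L, show L.length - 1 = n by omega]
      omega
    omega
  have hsegsum : ∀ (j : ℕ) (hj : j < p),
      FT m h occurs Vtx.mid ((segs ⟨j,hj⟩).getD 0 Vtx.mid)
        + durL (FT m h occurs) (segs ⟨j,hj⟩)
        + FT m h occurs ((segs ⟨j,hj⟩).getD ((segs ⟨j,hj⟩).length - 1) Vtx.mid) Vtx.mid
      ≤ T m h := by
    intro j hj
    refine hgen (segs ⟨j,hj⟩) (off segs j) (hlen _) (hmid _) (hs_off j hj.le) ?_ ?_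
    · have hb := off_succ segs hj
      rw [show off segs j + 1 + (segs ⟨j,hj⟩).length = off segs (j+1) by omega]
      exact hs_off _ hj
    · intro r hr
      have hsv := hsval j hj (r+1) (by omega)
      rw [show off segs j + 1 + r = off segs j + (r+1) by omega, hsv,
        List.getD_cons_succ]
  have hmem0 : ∀ (j : Fin p) (r : ℕ) (hr : r < (segs j).length),
      (segs j).getD r Vtx.mid ≠ Vtx.mid := by
    intro j r hr hcon
    rw [List.getD_eq_getElem _ _ hr] at hcon
    exact hmid j (hcon ▸ List.getElem_mem hr)
  have hends : ∀ (j : ℕ) (hj : j < p),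
      ((segs ⟨j,hj⟩).getD 0 Vtx.mid = Vtx.top ∨ (segs ⟨j,hj⟩).getD 0 Vtx.mid = Vtx.bot) ∧
      ((segs ⟨j,hj⟩).getD ((segs ⟨j,hj⟩).length - 1) Vtx.mid = Vtx.top ∨
        (segs ⟨j,hj⟩).getD ((segs ⟨j,hj⟩).length - 1) Vtx.mid = Vtx.bot) := by
    intro j hj
    have hs1 := hsegsum j hj
    have hl1 := hlen ⟨j,hj⟩
    constructor
    · by_contra hcon
      rw [FT_from_mid occurs _ (hmem0 _ 0 (by omega)), if_neg hcon] at hs1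
      omega
    · by_contra hcon
      rw [FT_to_mid occurs _ (hmem0 _ _ (by omega)), if_neg hcon] at hs1
      omega
  have hdecomp : ∀ n, n < N → ∃ (j : ℕ) (hj : j < p) (r : ℕ),
      r < 1 + (segs ⟨j,hj⟩).length ∧ n = off segs j + r := by
    have haux : ∀ jj, jj ≤ p → ∀ n, n < off segs jj → ∃ (j : ℕ) (hj : j < p) (r : ℕ),
        r < 1 + (segs ⟨j,hj⟩).length ∧ n = off segs j + r := by
      intro jj
      induction jj with
      | zero => intro _ n hn; rw [off_zero] at hn; omega
      | succ k ih =>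
        intro hk n hn
        by_cases hnk : n < off segs k
        · exact ih (by omega) n hnk
        · have hkp : k < p := hk
          refine ⟨k, hkp, n - off segs k, ?_, by omega⟩
          have := off_succ segs hkp
          omega
    intro n hn; exact haux p le_rfl n hn
  have hmid_char : ∀ n, s n = Vtx.mid → ∃ (j : ℕ), ∃ (hj : j < p), n % N = off segs j := by
    intro n hsn
    have hnN : n % N < N := Nat.mod_lt _ (by omega)
    obtain ⟨j, hj, r, hr, hoff⟩ := hdecomp _ hnN
    refine ⟨j, hj, ?_⟩
    rcases Nat.eq_zero_or_pos r with rfl | hrpos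
    · omega
    · exfalso
      have hsn' : (word segs).getD (n % N) Vtx.mid = Vtx.mid := by rw [← hsW]; exact hsn
      rw [hoff, getW segs j r hj hr] at hsn'
      obtain ⟨r', rfl⟩ : ∃ r', r = r' + 1 := ⟨r - 1, by omega⟩
      rw [List.getD_cons_succ] at hsn'
      exact hmem0 ⟨j,hj⟩ r' (by omega) hsn'
  -- neighbours of any `mid` on the path are `top`/`bot`
  have hnbhd : ∀ n, 1 ≤ n → s n = Vtx.mid →
      ((s (n-1) = Vtx.top ∨ s (n-1) = Vtx.bot) ∧
       (s (n+1) = Vtx.top ∨ s (n+1) = Vtx.bot)) := by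
    intro n hn1 hsn
    obtain ⟨j, hj, hoff⟩ := hmid_char n hsn
    have hdm := Nat.div_add_mod n N
    have hcm : N * (n / N) = (n / N) * N := Nat.mul_comm _ _
    have hq : n = off segs j + (n / N) * N := by omega
    have hlast : ∀ (jj : ℕ) (hjj : jj < p),
        s (off segs jj + (segs ⟨jj,hjj⟩).length) = Vtx.top ∨
        s (off segs jj + (segs ⟨jj,hjj⟩).length) = Vtx.bot := by
      intro jj hjj
      have hl1 := hlen ⟨jj,hjj⟩
      have hsv := hsval jj hjj ((segs ⟨jj,hjj⟩).length) (by omega)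
      rw [hsv, getD_cons_length _ _ _ hl1]
      exact (hends jj hjj).2
    constructor
    · rcases Nat.eq_zero_or_pos (off segs j) with hj0 | hjpos
      · have hnq : 1 ≤ n / N := by
          rcases Nat.eq_zero_or_pos (n / N) with hz | hz
          · rw [hz, Nat.mul_zero] at hdm; omega
          · exact hz
        obtain ⟨q, hq'⟩ : ∃ q, n / N = q + 1 := ⟨n / N - 1, by omega⟩
        rw [hq'] at hdm
        have hNq : N * (q + 1) = q * N + N := by ring
        have hprev : s (n - 1) = s (N - 1) := by
          rw [show n - 1 = (N - 1) + q * N by omega, hper]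
        have hp1 : p - 1 < p := by omega
        have hNoff : N = off segs (p - 1) + 1 + (segs ⟨p-1, hp1⟩).length := by
          have := off_succ segs hp1
          rw [show p - 1 + 1 = p by omega] at this
          omega
        rw [hprev, show N - 1 = off segs (p-1) + (segs ⟨p-1,hp1⟩).length by omega]
        exact hlast (p-1) hp1
      · have hj1 : 1 ≤ j := by
          rcases Nat.eq_zero_or_pos j with rfl | hz
          · rw [off_zero] at hjpos; omega
          · exact hz
        have hjm : j - 1 < p := by omega
        have hoffj : off segs j = off segs (j-1) + 1 + (segs ⟨j-1, hjm⟩).length := by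
          have := off_succ segs hjm
          rw [show j - 1 + 1 = j by omega] at this
          omega
        have hprev : s (n - 1) = s (off segs j - 1) := by
          rw [show n - 1 = (off segs j - 1) + (n / N) * N by omega, hper]
        rw [hprev, show off segs j - 1 = off segs (j-1) + (segs ⟨j-1,hjm⟩).length by omega]
        exact hlast (j-1) hjm
    · have hnext : s (n + 1) = s (off segs j + 1) := by
        rw [show n + 1 = (off segs j + 1) + (n / N) * N by omega, hper]
      have hsv := hsval j hj 1 (by have := hlen ⟨j,hj⟩; omega)
      rw [hnext, hsv, List.getD_cons_succ]
      exact (hends j hj).1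
  -- the pivot vertex and its deadline
  have hm0 : 0 < m := by omega
  set P : Vtx m h := Vtx.pvt ⟨0, hm0⟩ false with hP
  have hRDP : RD m h P < T m h := by
    have hexp : RD m h P = T m h / 2 + m * (2*(3*m+2)*(l h) + l h) + 4*h
        - (2 * ((⟨0, hm0⟩ : Fin m) : ℕ) + 1) * (l h) := rfl
    have hT2 : T m h = 2 * (m * (2 * (3 * m + 1) * l h + l h)
        + m * (2 * (3 * m + 2) * l h + l h) + l h + 2 * h) := rfl
    have hl : l h = 24*h+34 := rfl
    have hv0 : ((⟨0, hm0⟩ : Fin m) : ℕ) = 0 := rfl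
    rw [hv0] at hexp
    set X := m * (2 * (3 * m + 1) * l h + l h) with hX
    set Y := m * (2 * (3 * m + 2) * l h + l h) with hY
    omega
  have hPnm : Vtx.mid ≠ P := by simp [hP]
  have hPne : ∀ w : Vtx m h, w = Vtx.top ∨ w = Vtx.bot → w ≠ P := by
    rintro w (rfl|rfl) hc <;> simp [hP] at hc
  intro j0
  obtain ⟨jv, hj⟩ := j0
  have hs1 := hsegsum jv hj
  have hl1 := hlen ⟨jv, hj⟩
  have hub : durL (FT m h occurs) (segs ⟨jv,hj⟩) ≤ T m h / 2 := by
    have hx : T m h / 4 ≤ FT m h occurs Vtx.mid ((segs ⟨jv,hj⟩).getD 0 Vtx.mid) := by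
      rw [FT_from_mid occurs _ (hmem0 _ 0 (by omega))]
      split <;> omega
    have hy : T m h / 4 ≤ FT m h occurs
        ((segs ⟨jv,hj⟩).getD ((segs ⟨jv,hj⟩).length - 1) Vtx.mid) Vtx.mid := by
      rw [FT_to_mid occurs _ (hmem0 _ _ (by omega))]
      split <;> omega
    omega
  refine ⟨?_, hub⟩
  rcases Nat.lt_or_ge (segs ⟨jv,hj⟩).length 2 with hlen2 | hlen2
  · -- impossible: a length-one segment leads to a violated pivot deadline
    exfalso
    have hlen1 : (segs ⟨jv,hj⟩).length = 1 := by omega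
    set v := (segs ⟨jv,hj⟩).getD 0 Vtx.mid with hv
    have hvtb : v = Vtx.top ∨ v = Vtx.bot := (hends jv hj).1
    obtain ⟨aP, _, haP⟩ := hio P 0
    set A := off segs jv + (aP + 1) * N with hA
    have hkN : aP + 1 ≤ (aP + 1) * N := Nat.le_mul_of_pos_right _ (by omega)
    have hsA : s A = Vtx.mid := by rw [hA, hper]; exact hs_off jv hj.le
    have hsA1 : s (A+1) = v := by
      rw [show A + 1 = (off segs jv + 1) + (aP + 1) * N by omega, hper]
      have hsv := hsval jv hj 1 (by omega)
      rw [hsv, List.getD_cons_succ]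
    have hsA2 : s (A+2) = Vtx.mid := by
      rw [show A + 2 = (off segs jv + 2) + (aP + 1) * N by omega, hper]
      have hoff2 : off segs (jv+1) = off segs jv + 2 := by
        rw [off_succ segs hj, hlen1]
      rw [← hoff2]
      exact hs_off _ hj
    have hprev := (hnbhd A (by omega) hsA).1
    have hnext := (hnbhd (A+2) (by omega) hsA2).2
    set a := Nat.findGreatest (fun n => s n = P) A with haDef
    have haP' : s a = P :=
      Nat.findGreatest_spec (P := fun n => s n = P) (show aP ≤ A by omega) haP
    have haA : a ≤ A := Nat.findGreatest_le A
    have hamax : ∀ i, a < i → i ≤ A → s i ≠ P := fun i h1 h2 =>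
      Nat.findGreatest_is_greatest (P := fun n => s n = P) h1 h2
    have haneA : a ≠ A := by intro e; rw [e, hsA] at haP'; exact hPnm haP'
    have haneA1 : a ≠ A - 1 := by
      intro e; rw [e] at haP'; exact hPne _ hprev haP'
    have haA2 : a + 2 ≤ A := by omega
    obtain ⟨bW, hbW1, hbW2⟩ := hio P (A+4)
    have hbex : ∃ n, A + 3 < n ∧ s n = P := ⟨bW, by omega, hbW2⟩
    set b := Nat.find hbex with hbDef
    obtain ⟨hb1, hb2⟩ := Nat.find_spec hbex
    have hbmin : ∀ i, i < b → ¬(A+3 < i ∧ s i = P) := fun i hi => Nat.find_min hbex hi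
    have hcons : ∀ i, a < i → i < b → s i ≠ P := by
      intro i h1 h2
      rcases Nat.lt_or_ge A i with hAi | hAi
      · rcases Nat.lt_or_ge (A+3) i with h3 | h3
        · intro hc; exact hbmin i h2 ⟨h3, hc⟩
        · have hi3 : i = A+1 ∨ i = A+2 ∨ i = A+3 := by omega
          rcases hi3 with rfl | rfl | rfl
          · rw [hsA1]; exact hPne v hvtb
          · rw [hsA2]; exact hPnm
          · exact hPne _ hnext
      · exact hamax i h1 hAi
    have hdb := hRD P a b (by omega) haP' hb2 hcons
    have hsub : Finset.Ico (A-1) (A+3) ⊆ Finset.Ico a b := by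
      intro x hx
      rw [Finset.mem_Ico] at *
      omega
    have hmono : ∑ i ∈ Finset.Ico (A-1) (A+3), FT m h occurs (s i) (s (i+1))
        ≤ dur (FT m h occurs) s a b :=
      Finset.sum_le_sum_of_subset hsub
    have hvaln : v ≠ Vtx.mid := by rcases hvtb with e|e <;> rw [e] <;> simp
    have hprevn : s (A-1) ≠ Vtx.mid := by rcases hprev with e|e <;> rw [e] <;> simp
    have hnextn : s (A+3) ≠ Vtx.mid := by rcases hnext with e|e <;> rw [e] <;> simp
    have hcalc : ∑ i ∈ Finset.Ico (A-1) (A+3), FT m h occurs (s i) (s (i+1)) = T m h := by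
      rw [Finset.sum_Ico_eq_sum_range, show A + 3 - (A-1) = 4 by omega]
      rw [Finset.sum_range_succ, Finset.sum_range_succ, Finset.sum_range_succ,
        Finset.sum_range_succ, Finset.sum_range_zero]
      have e0 : A - 1 + 0 = A - 1 := by omega
      have e1 : A - 1 + 1 = A := by omega
      have e2 : A - 1 + 2 = A + 1 := by omega
      have e3 : A - 1 + 3 = A + 2 := by omega
      have e4 : A + 1 + 1 = A + 2 := by omega
      have e5 : A + 2 + 1 = A + 3 := by omega
      rw [e0, e1, e2, e3, e4, e5, hsA, hsA1, hsA2]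
      rw [FT_to_mid occurs _ hprevn, if_pos hprev,
        FT_from_mid occurs _ hvaln, if_pos hvtb,
        FT_to_mid occurs _ hvaln, if_pos hvtb,
        FT_from_mid occurs _ hnextn, if_pos hnext]
      omega
    omega
  · -- length ≥ 2: positive duration
    have e0 : s (off segs jv + 1) = (segs ⟨jv,hj⟩).getD 0 Vtx.mid := by
      have hsv := hsval jv hj 1 (by omega)
      rw [hsv, List.getD_cons_succ]
    have e1 : s (off segs jv + 2) = (segs ⟨jv,hj⟩).getD 1 Vtx.mid := by
      have hsv := hsval jv hj 2 (by omega)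
      rw [hsv, List.getD_cons_succ]
    have h01 : (segs ⟨jv,hj⟩).getD 0 Vtx.mid ≠ (segs ⟨jv,hj⟩).getD 1 Vtx.mid := by
      intro hc
      exact hdist (off segs jv + 1)
        (by rw [e0, show off segs jv + 1 + 1 = off segs jv + 2 by omega, e1]; exact hc)
    have hFT := FT_pos' occurs h01
    have hds := durL_sum (FT m h occurs) Vtx.mid (segs ⟨jv,hj⟩)
    have hone : FT m h occurs ((segs ⟨jv,hj⟩).getD 0 Vtx.mid) ((segs ⟨jv,hj⟩).getD (0+1) Vtx.mid)
        ≤ ∑ i ∈ Finset.range ((segs ⟨jv,hj⟩).length - 1),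
            FT m h occurs ((segs ⟨jv,hj⟩).getD i Vtx.mid) ((segs ⟨jv,hj⟩).getD (i+1) Vtx.mid) :=
      Finset.single_le_sum
        (f := fun i => FT m h occurs ((segs ⟨jv,hj⟩).getD i Vtx.mid)
          ((segs ⟨jv,hj⟩).getD (i+1) Vtx.mid))
        (fun i _ => Nat.zero_le _) (Finset.mem_range.mpr (by omega))
    have hone' : 0 < FT m h occurs ((segs ⟨jv,hj⟩).getD 0 Vtx.mid)
        ((segs ⟨jv,hj⟩).getD (0+1) Vtx.mid) := hFT
    omega

end CRUAV
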